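/- Let C be a cost structure over alphabets α, β with costs in ℕ, let k ∈ ℕ, and let C + k denote the cost structure obtained by adding k to every insert, delete, and substitution cost of C. Then for all lists Q and R of lengths m and n respectively, levenshtein (C + k) Q R ≤ levenshtein C Q R + (m + n)·k. -/

import Mathlib

/-- A cost structure for Levenshtein edit distance (as in the former Mathlib file
`Mathlib/Data/List/EditDistance/Defs.lean`, since removed from Mathlib). -/
structure Levenshtein.Cost (α β δ : Type*) where
  /-- Cost to delete an element from a list. -/
  delete : α → δ
  /-- Cost in insert an element into a list. -/
  insert : β → δ
  /-- Cost to substitute one element for another in a list. -/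
  substitute : α → β → δ

/-- (Implementation detail for `levenshtein`, as in former Mathlib.) -/
def Levenshtein.impl {α β δ : Type*} [AddZeroClass δ] [Min δ]
    (C : Levenshtein.Cost α β δ) (xs : List α) (y : β) (d : {r : List δ // 0 < r.length}) :
    {r : List δ // 0 < r.length} :=
  let ⟨ds, w⟩ := d
  xs.zip (ds.zip ds.tail) |>.foldr
    (init := ⟨[C.insert y + ds.getLast (List.ne_nil_of_length_pos w)], by simp⟩)
    (fun ⟨x, d₀, d₁⟩ ⟨r, w⟩ =>
      ⟨min (C.delete x + r[0]) (min (C.insert y + d₀) (C.substitute x y + d₁)) :: r, by simp⟩)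

/-- `suffixLevenshtein C xs ys` computes the Levenshtein distance (using the cost functions
provided by `C`) from each suffix of `xs` to `ys` (as in former Mathlib). -/
def suffixLevenshtein {α β δ : Type*} [AddZeroClass δ] [Min δ]
    (C : Levenshtein.Cost α β δ) (xs : List α) (ys : List β) :
    {r : List δ // 0 < r.length} :=
  ys.foldr
    (Levenshtein.impl C xs)
    (xs.foldr (init := ⟨[0], by simp⟩) (fun a ⟨r, w⟩ => ⟨(C.delete a + r[0]) :: r, by simp⟩))

/-- The Levenshtein distance between two lists, using the cost functions provided by `C`
(as in former Mathlib). -/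
def levenshtein {α β δ : Type*} [AddZeroClass δ] [Min δ]
    (C : Levenshtein.Cost α β δ) (xs : List α) (ys : List β) : δ :=
  let ⟨r, w⟩ := suffixLevenshtein C xs ys
  r[0]

/-- The cost structure obtained by adding `k` to every insert, delete, and
substitution cost of `C`. -/
def Levenshtein.Cost.addConst {α β : Type*} (C : Levenshtein.Cost α β ℕ) (k : ℕ) :
    Levenshtein.Cost α β ℕ where
  delete a := C.delete a + k
  insert b := C.insert b + k
  substitute a b := C.substitute a b + k

/-! The edit distance satisfies the dynamic-programming recursion
`L (x :: xs) (y :: ys) =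
  min (del x + L xs (y :: ys)) (min (ins y + L (x :: xs) ys) (sub x y + L xs ys))`,
which has to be recovered from the fold-based implementation. Every branch pays one edit cost and
removes at least one element from the two lists, so by induction on the lists, raising each cost
by at most `k ≥ 0` raises the distance by at most `(|xs| + |ys|) • k`. -/

namespace Levenshtein

variable {α β δ : Type*} [AddZeroClass δ] [Min δ] (C : Cost α β δ)

theorem impl_cons {x : α} {xs : List α} {y : β} {d : δ} {ds : List δ} (w)
    (w' : 0 < ds.length) :
    impl C (x :: xs) y ⟨d :: ds, w⟩ =
      let ⟨r, w⟩ := impl C xs y ⟨ds, w'⟩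
      ⟨min (C.delete x + r[0]) (min (C.insert y + d) (C.substitute x y + ds[0])) :: r, by simp⟩ :=
  match ds, w' with | _ :: _, _ => rfl

theorem impl_length {xs : List α} {y : β} (d : {r : List δ // 0 < r.length})
    (w : d.1.length = xs.length + 1) :
    (impl C xs y d).1.length = xs.length + 1 := by
  induction xs generalizing d with
  | nil => rfl
  | cons x xs ih =>
    obtain ⟨_ | ⟨d₁, _ | ⟨d₂, ds⟩⟩, _⟩ := d
    · simp at w
    · simp at w
    · exact congrArg (· + 1) (ih ⟨d₂ :: ds, by simp⟩ (by simpa using w))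

end Levenshtein

section Recursion

open Levenshtein

variable {α β δ : Type*} [AddZeroClass δ] [Min δ] (C : Cost α β δ)

theorem levenshtein_eq_getElem (xs : List α) (ys : List β) :
    levenshtein C xs ys = (suffixLevenshtein C xs ys).1[0]'(suffixLevenshtein C xs ys).2 := rfl

theorem suffixLevenshtein_cons_right (xs : List α) (y : β) (ys : List β) :
    suffixLevenshtein C xs (y :: ys) = impl C xs y (suffixLevenshtein C xs ys) := rfl

theorem suffixLevenshtein_length (xs : List α) (ys : List β) :
    (suffixLevenshtein C xs ys).1.length = xs.length + 1 := by
  induction ys with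
  | nil =>
    induction xs with
    | nil => rfl
    | cons _ xs ih => exact congrArg (· + 1) ih
  | cons y ys ih => exact impl_length C _ ih

theorem levenshtein_nil_nil : levenshtein C ([] : List α) ([] : List β) = 0 := rfl

theorem levenshtein_cons_nil (x : α) (xs : List α) :
    levenshtein C (x :: xs) ([] : List β) = C.delete x + levenshtein C xs [] := rfl

theorem levenshtein_nil_cons (y : β) (ys : List β) :
    levenshtein C [] (y :: ys) = C.insert y + levenshtein C [] ys := by
  have hlen := suffixLevenshtein_length C [] ys
  rw [levenshtein_eq_getElem C [], levenshtein_eq_getElem C [], suffixLevenshtein_cons_right]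
  generalize suffixLevenshtein C [] ys = S at hlen ⊢
  obtain ⟨_ | ⟨d, _ | _⟩, w⟩ := S <;> simp at hlen
  rfl

theorem suffixLevenshtein_cons_left_tail (x : α) (xs : List α) (ys : List β) :
    (suffixLevenshtein C (x :: xs) ys).1.tail = (suffixLevenshtein C xs ys).1 := by
  induction ys with
  | nil => rfl
  | cons y ys ih =>
    rw [suffixLevenshtein_cons_right, suffixLevenshtein_cons_right]
    generalize suffixLevenshtein C (x :: xs) ys = S at ih
    obtain ⟨_ | ⟨d, ds⟩, w⟩ := S
    · simp at w
    · subst ih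
      rw [impl_cons _ _ (suffixLevenshtein C xs ys).2]
      rfl

theorem suffixLevenshtein_cons_left (x : α) (xs : List α) (ys : List β) :
    suffixLevenshtein C (x :: xs) ys =
      ⟨levenshtein C (x :: xs) ys :: (suffixLevenshtein C xs ys).1, by simp⟩ := by
  have htail := suffixLevenshtein_cons_left_tail C x xs ys
  rw [levenshtein_eq_getElem]
  generalize suffixLevenshtein C (x :: xs) ys = S at htail ⊢
  obtain ⟨_ | ⟨d, ds⟩, w⟩ := S
  · simp at w
  · subst htail
    rfl

theorem levenshtein_cons_cons (x : α) (xs : List α) (y : β) (ys : List β) :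
    levenshtein C (x :: xs) (y :: ys) =
      min (C.delete x + levenshtein C xs (y :: ys))
        (min (C.insert y + levenshtein C (x :: xs) ys)
          (C.substitute x y + levenshtein C xs ys)) := by
  rw [levenshtein_eq_getElem C (x :: xs), suffixLevenshtein_cons_right,
    suffixLevenshtein_cons_left, impl_cons (w' := (suffixLevenshtein C xs ys).2)]
  rfl

end Recursion

theorem add_le_add_add_nsmul_of_lt {δ : Type*} [AddCommMonoid δ] [PartialOrder δ]
    [IsOrderedAddMonoid δ] {a a' b b' k : δ} {n m : ℕ} (hk : 0 ≤ k) (ha : a' ≤ a + k)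
    (hb : b' ≤ b + n • k) (hnm : n < m) : a' + b' ≤ a + b + m • k :=
  calc a' + b' ≤ (a + k) + (b + n • k) := add_le_add ha hb
    _ = a + b + (n + 1) • k := by rw [succ_nsmul]; abel
    _ ≤ a + b + m • k := add_le_add_right (nsmul_le_nsmul_left hk hnm) _

section ShiftedCosts

open Levenshtein

variable {α β δ : Type*} [AddCommMonoid δ] [LinearOrder δ] [IsOrderedAddMonoid δ]

theorem levenshtein_le_add_length_nsmul {C C' : Cost α β δ} {k : δ} (hk : 0 ≤ k)
    (hdel : ∀ a, C'.delete a ≤ C.delete a + k) (hins : ∀ b, C'.insert b ≤ C.insert b + k)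
    (hsub : ∀ a b, C'.substitute a b ≤ C.substitute a b + k) (xs : List α) (ys : List β) :
    levenshtein C' xs ys ≤ levenshtein C xs ys + (xs.length + ys.length) • k := by
  induction xs generalizing ys with
  | nil =>
    induction ys with
    | nil => simp [levenshtein_nil_nil]
    | cons y ys ih =>
      rw [levenshtein_nil_cons, levenshtein_nil_cons]
      exact add_le_add_add_nsmul_of_lt hk (hins y) ih (by simp)
  | cons x xs ihx =>
    induction ys with
    | nil =>
      rw [levenshtein_cons_nil, levenshtein_cons_nil]
      exact add_le_add_add_nsmul_of_lt hk (hdel x) (ihx []) (by simp)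
    | cons y ys ihy =>
      rw [levenshtein_cons_cons, levenshtein_cons_cons, ← min_add_add_right, ← min_add_add_right]
      exact min_le_min (add_le_add_add_nsmul_of_lt hk (hdel x) (ihx _) (by simp)) <|
        min_le_min (add_le_add_add_nsmul_of_lt hk (hins y) ihy (by simp))
          (add_le_add_add_nsmul_of_lt hk (hsub x y) (ihx ys) (by simp; omega))

end ShiftedCosts

/-- **Upper bound for shifted gap penalties (Lemma 3, upper half).**
Adding `k` to every cost increases the Levenshtein distance by at most `(m + n)·k`,
where `m` and `n` are the lengths of the two lists, since any alignment uses at most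
`m + n` edit operations. -/
theorem levenshtein_addConst_le {α β : Type*} (C : Levenshtein.Cost α β ℕ) (k : ℕ)
    (Q : List α) (R : List β) :
    levenshtein (Levenshtein.Cost.addConst C k) Q R ≤
      levenshtein C Q R + (Q.length + R.length) * k := by
  simpa using levenshtein_le_add_length_nsmul (C := C) k.zero_le (fun _ => le_rfl)
    (fun _ => le_rfl) (fun _ _ => le_rfl) Q R
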